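/- Let S be a measurable space, μ a probability measure on the trajectory space ℕ → S (with the product σ-algebra), Φ : S → ℝ bounded and measurable, γ ∈ ℝ with 0 < γ < 1, and r : S × S → ℝ bounded and measurable. Then the expected shaped discounted return equals the expected original discounted return minus the expected initial potential: ∫ (∑_{t=0}^∞ γ^t · (r(s t, s (t+1)) + γ·Φ(s (t+1)) − Φ(s t))) dμ(s) = ∫ (∑_{t=0}^∞ γ^t · r(s t, s (t+1))) dμ(s) − ∫ Φ(s 0) dμ(s). -/

import Mathlib

/-!
The shaping terms `γ ^ (t + 1) Φ(s (t+1)) - γ ^ t Φ(s t)` telescope, so along every trajectory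
the shaped discounted return is the original one minus `Φ (s 0)`. Boundedness makes both
discounted returns dominated by a geometric series, hence bounded measurable functions of the
trajectory, and linearity of the integral finishes the argument.
-/

open MeasureTheory

section DiscountedSum

variable {γ C : ℝ} {a : ℕ → ℝ}

lemma norm_pow_mul_le_of_abs_le (hγ0 : 0 ≤ γ) (ha : ∀ t, |a t| ≤ C) (t : ℕ) :
    ‖γ ^ t * a t‖ ≤ C * γ ^ t := by
  rw [Real.norm_eq_abs, abs_mul, abs_pow, abs_of_nonneg hγ0, mul_comm]
  exact mul_le_mul_of_nonneg_right (ha t) (pow_nonneg hγ0 t)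

lemma summable_pow_mul_of_abs_le (hγ0 : 0 ≤ γ) (hγ1 : γ < 1) (ha : ∀ t, |a t| ≤ C) :
    Summable fun t => γ ^ t * a t :=
  ((summable_geometric_of_lt_one hγ0 hγ1).mul_left C).of_norm_bounded
    (norm_pow_mul_le_of_abs_le hγ0 ha)

lemma abs_tsum_pow_mul_le (hγ0 : 0 ≤ γ) (hγ1 : γ < 1) (ha : ∀ t, |a t| ≤ C) :
    |∑' t, γ ^ t * a t| ≤ C * (1 - γ)⁻¹ :=
  tsum_of_norm_bounded ((hasSum_geometric_of_lt_one hγ0 hγ1).mul_left C)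
    (norm_pow_mul_le_of_abs_le hγ0 ha)

lemma tsum_pow_mul_add_potential_sub {B : ℝ} {f : ℕ → ℝ} (hγ0 : 0 ≤ γ) (hγ1 : γ < 1)
    (ha : ∀ t, |a t| ≤ C) (hf : ∀ t, |f t| ≤ B) :
    ∑' t, γ ^ t * (a t + γ * f (t + 1) - f t) = (∑' t, γ ^ t * a t) - f 0 := by
  have hfSum := (summable_pow_mul_of_abs_le hγ0 hγ1 hf).hasSum
  have hshift : HasSum (fun t => γ ^ (t + 1) * f (t + 1)) ((∑' t, γ ^ t * f t) - f 0) := by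
    simpa using (hasSum_nat_add_iff' 1).2 hfSum
  have htotal := (summable_pow_mul_of_abs_le hγ0 hγ1 ha).hasSum.add (hshift.sub hfSum)
  rw [sub_sub_cancel_left, ← sub_eq_add_neg] at htotal
  rw [← htotal.tsum_eq]
  congr 1 with t
  ring

end DiscountedSum

lemma integrable_tsum_pow_mul {X : Type*} [MeasurableSpace X] {μ : Measure X}
    [IsFiniteMeasure μ] {γ C : ℝ} {a : X → ℕ → ℝ} (hγ0 : 0 ≤ γ) (hγ1 : γ < 1)
    (hm : ∀ t, Measurable fun x => a x t) (ha : ∀ x t, |a x t| ≤ C) :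
    Integrable (fun x => ∑' t, γ ^ t * a x t) μ :=
  .of_bound (Measurable.tsum fun t => (hm t).const_mul _).aestronglyMeasurable _
    (ae_of_all _ fun x => abs_tsum_pow_mul_le hγ0 hγ1 (ha x))

/-- Expectation form of the shaping-invariance argument (Proposition 1):
for a probability measure `μ` on trajectory space (product σ-algebra on
`ℕ → S`), bounded measurable potential `Φ`, discount `0 < γ < 1`, and bounded
measurable transition reward `r`, the expected shaped discounted return equals
the expected original discounted return minus the expected initial potential. -/
theorem stmt5 {S : Type*} [MeasurableSpace S]
    (μ : Measure (ℕ → S)) [IsProbabilityMeasure μ]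
    (Φ : S → ℝ) (hΦm : Measurable Φ) (B : ℝ) (hΦb : ∀ x, |Φ x| ≤ B)
    (γ : ℝ) (hγ0 : 0 < γ) (hγ1 : γ < 1)
    (r : S × S → ℝ) (hrm : Measurable r) (C : ℝ) (hrb : ∀ p, |r p| ≤ C) :
    ∫ s, (∑' t, γ ^ t * (r (s t, s (t + 1)) + γ * Φ (s (t + 1)) - Φ (s t))) ∂μ
      = (∫ s, (∑' t, γ ^ t * r (s t, s (t + 1))) ∂μ) - ∫ s, Φ (s 0) ∂μ := by
  have hreturn : Integrable (fun s : ℕ → S => ∑' t, γ ^ t * r (s t, s (t + 1))) μ :=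
    integrable_tsum_pow_mul hγ0.le hγ1 (fun _ => by fun_prop) fun _ _ => hrb _
  have hpotential : Integrable (fun s : ℕ → S => Φ (s 0)) μ :=
    .of_bound (hΦm.comp (measurable_pi_apply 0)).aestronglyMeasurable B (ae_of_all _ fun s => hΦb (s 0))
  rw [← integral_sub hreturn hpotential]
  exact integral_congr_ae <| ae_of_all _ fun s =>
    tsum_pow_mul_add_potential_sub hγ0.le hγ1 (fun _ => hrb _) fun _ => hΦb _
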